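/- Let g : ℝ → ℝ be analytic near 0, odd, with a strictly positive derivative, and suppose g is not affine near 0 (g'' is not identically zero near 0). Then there exists ε > 0 such that for every s with 0 < |s| < ε, there is no interval around 0 on which (g⁻¹)'(x) = (g⁻¹)'(-2s - x) holds for all x in a neighborhood of -s; equivalently, the map x ↦ -2s - x is not an isometry for the pulled-back line element (g⁻¹)'(x)|dx| near the point -s. -/

import Mathlib

/-!
If `G` is the local inverse of `g`, then `G' = 1 / (g' ∘ G)`, so the symmetry
`G'(x) = G'(-2s - x)` at two points `x ≠ -2s - x` on the same side of `0` forces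
`g'(u) = g'(v)` for two distinct points `u = G x`, `v = G (-2s - x)` on the same side of `0`.
By Rolle's theorem `g''` then vanishes strictly between them, which is impossible: `g''` is
analytic and not identically zero, so its zeros are isolated.
-/

open Filter Topology Set

theorem exists_pos_forall_mem_Ioo_of_eventually {p : ℝ → Prop} (h : ∀ᶠ x in 𝓝 0, p x) :
    ∃ ρ > 0, ∀ x ∈ Ioo (-ρ) ρ, p x := by
  obtain ⟨ρ, hρ, hp⟩ := Metric.eventually_nhds_iff.1 h
  exact ⟨ρ, hρ, fun x hx => hp (by rwa [Real.dist_eq, sub_zero, abs_lt])⟩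

theorem injOn_of_deriv_ne_zero {f : ℝ → ℝ} {S : Set ℝ} (hS : S.OrdConnected)
    (hf : ContinuousOn f S) (hf' : ∀ x ∈ S, deriv f x ≠ 0) : InjOn f S := by
  intro a ha b hb hab
  by_contra hne
  wlog hlt : a < b generalizing a b
  · exact this hb ha hab.symm (Ne.symm hne) ((not_lt.1 hlt).lt_of_ne (Ne.symm hne))
  obtain ⟨c, hc, hc0⟩ := exists_deriv_eq_zero hlt (hf.mono (hS.out ha hb)) hab
  exact hf' c (hS.out ha hb (Ioo_subset_Icc_self hc)) hc0

section LocalInverse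

variable {𝕜 : Type*} [NontriviallyNormedField 𝕜] [CompleteSpace 𝕜]

theorem HasStrictDerivAt.tendsto_of_leftInverse {g G : 𝕜 → 𝕜} {g' a : 𝕜}
    (hg : HasStrictDerivAt g g' a) (hg' : g' ≠ 0) (hG : ∀ᶠ x in 𝓝 a, G (g x) = x) :
    Tendsto G (𝓝 (g a)) (𝓝 a) := by
  simpa [hG.self_of_nhds] using (hg.to_local_left_inverse hg' hG).hasDerivAt.continuousAt.tendsto

theorem eventually_hasStrictDerivAt_of_leftInverse {g G g' : 𝕜 → 𝕜} {a : 𝕜}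
    (hg : ∀ᶠ z in 𝓝 a, HasStrictDerivAt g (g' z) z ∧ g' z ≠ 0)
    (hG : ∀ᶠ x in 𝓝 a, G (g x) = x) :
    ∀ᶠ y in 𝓝 (g a), g (G y) = y ∧ HasStrictDerivAt G (g' (G y))⁻¹ y := by
  obtain ⟨hga, hga'⟩ := hg.self_of_nhds
  -- `G` agrees near `g a` with the inverse given by the inverse function theorem,
  -- which is also a right inverse.
  have hright : ∀ᶠ y in 𝓝 (g a), g (G y) = y := by
    have hequiv := hga.hasStrictFDerivAt_equiv hga'
    filter_upwards [hequiv.localInverse_unique hG, hequiv.eventually_right_inverse]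
      with y hGy hy
    rwa [hGy]
  have hnear := hga.tendsto_of_leftInverse hga' hG (hg.and hG.eventually_nhds)
  filter_upwards [hright, hnear] with y hy ⟨⟨hgy, hgy'⟩, hGy⟩
  refine ⟨hy, ?_⟩
  simpa [hy] using hgy.to_local_left_inverse hgy' hGy

end LocalInverse

theorem exists_strictMonoOn_injOn_deriv_of_analyticAt {g : ℝ → ℝ} (hA : AnalyticAt ℝ g 0)
    (hpos : ∀ᶠ x in 𝓝 0, 0 < deriv g x) (hna : ∃ᶠ x in 𝓝 0, deriv (deriv g) x ≠ 0) :
    ∃ ρ > 0, StrictMonoOn g (Ioo (-ρ) ρ) ∧ InjOn (deriv g) (Ioo 0 ρ) ∧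
      InjOn (deriv g) (Ioo (-ρ) 0) := by
  have hne : ∀ᶠ z in 𝓝[≠] 0, deriv (deriv g) z ≠ 0 :=
    hA.deriv.deriv.eventually_eq_zero_or_eventually_ne_zero.resolve_left
      fun h => hna (h.mono fun _ hz => not_not.2 hz)
  obtain ⟨ρ, hρ, hρ'⟩ := exists_pos_forall_mem_Ioo_of_eventually
    ((hA.eventually_analyticAt.and hpos).and (eventually_nhdsWithin_iff.1 hne))
  have hcont : ContinuousOn g (Ioo (-ρ) ρ) := fun z hz =>
    (hρ' z hz).1.1.continuousAt.continuousWithinAt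
  have hcont' : ContinuousOn (deriv g) (Ioo (-ρ) ρ) := fun z hz =>
    (hρ' z hz).1.1.deriv.continuousAt.continuousWithinAt
  have hinj : ∀ S ⊆ Ioo (-ρ) ρ, S.OrdConnected → (0 : ℝ) ∉ S → InjOn (deriv g) S :=
    fun S hS hSc h0 => injOn_of_deriv_ne_zero hSc (hcont'.mono hS) fun z hz =>
      (hρ' z (hS hz)).2 (ne_of_mem_of_not_mem hz h0)
  refine ⟨ρ, hρ, strictMonoOn_of_deriv_pos (convex_Ioo _ _) hcont fun z hz =>
    (hρ' z (interior_subset hz)).1.2, hinj _ ?_ ordConnected_Ioo (by simp),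
    hinj _ ?_ ordConnected_Ioo (by simp)⟩
  · exact Ioo_subset_Ioo_left (by linarith)
  · exact Ioo_subset_Ioo_right hρ.le

theorem exists_injOn_deriv_of_leftInverse {g G : ℝ → ℝ} {ρ : ℝ} (hρ : 0 < ρ)
    (hg : ∀ᶠ z in 𝓝 0, HasStrictDerivAt g (deriv g z) z ∧ deriv g z ≠ 0) (hg0 : g 0 = 0)
    (hG : ∀ᶠ x in 𝓝 0, G (g x) = x) (hmono : StrictMonoOn g (Ioo (-ρ) ρ))
    (hinj_pos : InjOn (deriv g) (Ioo 0 ρ)) (hinj_neg : InjOn (deriv g) (Ioo (-ρ) 0)) :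
    ∃ r > 0, InjOn (deriv G) (Ioo 0 r) ∧ InjOn (deriv G) (Ioo (-r) 0) := by
  have h0 : (0 : ℝ) ∈ Ioo (-ρ) ρ := ⟨neg_neg_of_pos hρ, hρ⟩
  have hG0 : Tendsto G (𝓝 0) (𝓝 0) := by
    simpa [hg0] using hg.self_of_nhds.1.tendsto_of_leftInverse hg.self_of_nhds.2 hG
  have hder := eventually_hasStrictDerivAt_of_leftInverse hg hG
  rw [hg0] at hder
  obtain ⟨r, hr, hr'⟩ := exists_pos_forall_mem_Ioo_of_eventually
    (hder.and (hG0 (Ioo_mem_nhds h0.1 h0.2)))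
  have htransfer : ∀ V T, V ⊆ Ioo (-r) r → MapsTo G V T → InjOn (deriv g) T →
      InjOn (deriv G) V := by
    intro V T hV hVT hT
    have hleft : LeftInvOn g G V := fun y hy => (hr' y (hV hy)).1.1
    exact (inv_injective.comp_injOn (hT.comp hleft.injOn hVT)).congr fun y hy =>
      (hr' y (hV hy)).1.2.hasDerivAt.deriv.symm
  refine ⟨r, hr, htransfer _ _ (Ioo_subset_Ioo_left (by linarith)) ?_ hinj_pos,
    htransfer _ _ (Ioo_subset_Ioo_right hr.le) ?_ hinj_neg⟩
  -- `g` is increasing with `g 0 = 0`, so `G y` has the sign of `y = g (G y)`.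
  · intro y hy
    obtain ⟨⟨hgy, -⟩, hGy⟩ := hr' y ⟨by linarith [hy.1], hy.2⟩
    exact ⟨(hmono.lt_iff_lt h0 hGy).1 (by rw [hg0, hgy]; exact hy.1), hGy.2⟩
  · intro y hy
    obtain ⟨⟨hgy, -⟩, hGy⟩ := hr' y ⟨hy.1, by linarith [hy.2]⟩
    exact ⟨hGy.1, (hmono.lt_iff_lt hGy h0).1 (by rw [hg0, hgy]; exact hy.2)⟩

theorem not_eventually_eq_comp_reflect_of_injOn {φ : ℝ → ℝ} {S : Set ℝ} {c : ℝ}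
    (hφ : InjOn φ S) (hS : S ∈ 𝓝 c) : ¬ ∀ᶠ x in 𝓝 c, φ x = φ (2 * c - x) := by
  intro h
  have hrefl : Tendsto (fun x => 2 * c - x) (𝓝 c) (𝓝 c) := by
    simpa [two_mul] using (by fun_prop : Continuous fun x : ℝ => 2 * c - x).tendsto c
  have hnear : ∀ᶠ x in 𝓝 c, φ x = φ (2 * c - x) ∧ x ∈ S ∧ 2 * c - x ∈ S :=
    h.and (Filter.Eventually.and hS (hrefl hS))
  obtain ⟨x, ⟨hx, hxS, hxS'⟩, hxc⟩ :=
    ((hnear.filter_mono nhdsWithin_le_nhds).and (self_mem_nhdsWithin (s := {c}ᶜ))).exists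
  have hx_eq : x = 2 * c - x := hφ hxS hxS' hx
  exact hxc (mem_singleton_iff.2 (by linarith))

theorem not_eventually_eq_comp_reflect_of_injOn_Ioo {φ : ℝ → ℝ} {r c : ℝ}
    (h_pos : InjOn φ (Ioo 0 r)) (h_neg : InjOn φ (Ioo (-r) 0)) (hc : c ≠ 0) (hcr : |c| < r) :
    ¬ ∀ᶠ x in 𝓝 c, φ x = φ (2 * c - x) := by
  rcases hc.lt_or_gt with hc | hc
  · exact not_eventually_eq_comp_reflect_of_injOn h_neg
      (Ioo_mem_nhds (by linarith [neg_abs_le c]) hc)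
  · exact not_eventually_eq_comp_reflect_of_injOn h_pos
      (Ioo_mem_nhds hc ((le_abs_self c).trans_lt hcr))

theorem shear_gluing_not_isometric_general
    (g G : ℝ → ℝ)
    (hA : AnalyticAt ℝ g 0)
    (hodd : ∀ x, g (-x) = -g x)
    (hpos : ∀ᶠ x in 𝓝 (0 : ℝ), 0 < deriv g x)
    (hna : ∀ U ∈ 𝓝 (0 : ℝ), ∃ x ∈ U, deriv (deriv g) x ≠ 0)
    (hGl : ∀ᶠ x in 𝓝 (0 : ℝ), G (g x) = x) :
    ∃ ε > 0, ∀ s : ℝ, 0 < |s| → |s| < ε →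
      ¬ ∃ δ > 0, ∀ x : ℝ, |x - (-s)| < δ →
        deriv G x = deriv G (-2 * s - x) := by
  have hg0 : g 0 = 0 := CharZero.eq_neg_self_iff.1 (by simpa using hodd 0)
  have hstrict : ∀ᶠ z in 𝓝 0, HasStrictDerivAt g (deriv g z) z ∧ deriv g z ≠ 0 :=
    (hA.eventually_analyticAt.and hpos).mono fun z hz => ⟨hz.1.hasStrictDerivAt, hz.2.ne'⟩
  obtain ⟨ρ, hρ, hmono, hinj_pos, hinj_neg⟩ :=
    exists_strictMonoOn_injOn_deriv_of_analyticAt hA hpos (frequently_iff.2 fun hU => hna _ hU)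
  obtain ⟨r, hr, hG_pos, hG_neg⟩ :=
    exists_injOn_deriv_of_leftInverse hρ hstrict hg0 hGl hmono hinj_pos hinj_neg
  refine ⟨r, hr, fun s hs hsr ⟨δ, hδ, hsym⟩ => ?_⟩
  refine not_eventually_eq_comp_reflect_of_injOn_Ioo hG_pos hG_neg (c := -s) (by simpa using hs)
    (by rwa [abs_neg]) (Metric.eventually_nhds_iff.2 ⟨δ, hδ, fun x hx => ?_⟩)
  rw [Real.dist_eq] at hx
  convert hsym x hx using 2
  ring

theorem shear_gluing_not_isometric
    (g G : ℝ → ℝ)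
    (hA : AnalyticAt ℝ g 0)
    (hodd : ∀ x, g (-x) = -g x)
    (hpos : ∀ᶠ x in 𝓝 (0 : ℝ), 0 < deriv g x)
    (hna : ∀ U ∈ 𝓝 (0 : ℝ), ∃ x ∈ U, deriv (deriv g) x ≠ 0)
    (hGl : ∀ᶠ x in 𝓝 (0 : ℝ), G (g x) = x)
    (hGr : ∀ᶠ y in 𝓝 (g 0), g (G y) = y) :
    ∃ ε > 0, ∀ s : ℝ, 0 < |s| → |s| < ε →
      ¬ ∃ δ > 0, ∀ x : ℝ, |x - (-s)| < δ →
        deriv G x = deriv G (-2 * s - x) :=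
  shear_gluing_not_isometric_general g G hA hodd hpos hna hGl
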